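/- arXiv:0801.2748 — 3 statements merged into one kernel-verified Lean document; each statement's English description precedes it below -/
import Mathlib

section
/- Let A be a real symmetric positive definite n×n matrix, B a real symmetric positive definite m×m matrix, and C a real n×m matrix such that the block matrix Σ = [[A, C],[Cᵀ, B]] is positive semidefinite. If Σ is singular (not invertible), then ρ(A,B,C) = 1. -/
open Matrix

/-- The canonical correlation value ρ(A,B,C):
the supremum over nonzero a and nonzero b of (aᵀ C b)/(√(aᵀ A a)·√(bᵀ B b)). -/
noncomputable def rho {ι κ : Type*} [Fintype ι] [Fintype κ]
    (A : Matrix ι ι ℝ) (B : Matrix κ κ ℝ) (C : Matrix ι κ ℝ) : ℝ :=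
  sSup {r : ℝ | ∃ (a : ι → ℝ) (b : κ → ℝ), a ≠ 0 ∧ b ≠ 0 ∧
    r = (a ⬝ᵥ C.mulVec b) / (Real.sqrt (a ⬝ᵥ A.mulVec a) * Real.sqrt (b ⬝ᵥ B.mulVec b))}

/-!
Write `α = aᵀAa`, `β = bᵀBb`, `γ = aᵀCb`. Positive semidefiniteness of `Σ` says that
`t ↦ α t² + 2γ t + β` is nonnegative, so `γ² ≤ αβ` and every correlation ratio is at most `1`.
A nonzero kernel vector `(a, b)` of the singular matrix `Σ` has `α + 2γ + β = 0`, with `a ≠ 0`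
and `b ≠ 0` because `A` and `B` are positive definite; then `-γ = (α + β)/2 ≥ √α √β` by AM-GM,
so the ratio at `(-a, b)` is `1`, and the supremum is attained.
-/

namespace Matrix

variable {ι κ : Type*} [Fintype ι] [Fintype κ]
  {A : Matrix ι ι ℝ} {B : Matrix κ κ ℝ} {C : Matrix ι κ ℝ}

noncomputable def corrRatio (A : Matrix ι ι ℝ) (B : Matrix κ κ ℝ) (C : Matrix ι κ ℝ)
    (a : ι → ℝ) (b : κ → ℝ) : ℝ :=
  (a ⬝ᵥ C *ᵥ b) / (√(a ⬝ᵥ A *ᵥ a) * √(b ⬝ᵥ B *ᵥ b))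

theorem sumElim_dotProduct_fromBlocks_mulVec_sumElim {R : Type*} [CommRing R]
    (A : Matrix ι ι R) (B : Matrix κ κ R) (C : Matrix ι κ R) (x : ι → R) (y : κ → R) :
    Sum.elim x y ⬝ᵥ fromBlocks A C Cᵀ B *ᵥ Sum.elim x y
      = x ⬝ᵥ A *ᵥ x + 2 * (x ⬝ᵥ C *ᵥ y) + y ⬝ᵥ B *ᵥ y := by
  have hCt : y ⬝ᵥ Cᵀ *ᵥ x = x ⬝ᵥ C *ᵥ y := by
    rw [mulVec_transpose, dotProduct_comm, ← dotProduct_mulVec]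
  simp only [fromBlocks_mulVec, Sum.elim_comp_inl, Sum.elim_comp_inr,
    sumElim_dotProduct_sumElim, dotProduct_add, hCt]
  ring

theorem dotProduct_mulVec_nonneg_of_fromBlocks
    (hPSD : ∀ v : ι ⊕ κ → ℝ, 0 ≤ v ⬝ᵥ fromBlocks A C Cᵀ B *ᵥ v) (a : ι → ℝ) :
    0 ≤ a ⬝ᵥ A *ᵥ a := by
  simpa [sumElim_dotProduct_fromBlocks_mulVec_sumElim] using hPSD (Sum.elim a 0)

theorem sq_dotProduct_mulVec_le_of_fromBlocks
    (hPSD : ∀ v : ι ⊕ κ → ℝ, 0 ≤ v ⬝ᵥ fromBlocks A C Cᵀ B *ᵥ v) (a : ι → ℝ) (b : κ → ℝ) :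
    (a ⬝ᵥ C *ᵥ b) ^ 2 ≤ (a ⬝ᵥ A *ᵥ a) * (b ⬝ᵥ B *ᵥ b) := by
  have hdisc : discrim (a ⬝ᵥ A *ᵥ a) (2 * (a ⬝ᵥ C *ᵥ b)) (b ⬝ᵥ B *ᵥ b) ≤ 0 := by
    refine discrim_le_zero fun t => ?_
    have h := hPSD (Sum.elim (t • a) b)
    simp only [sumElim_dotProduct_fromBlocks_mulVec_sumElim, mulVec_smul, dotProduct_smul,
      smul_dotProduct, smul_eq_mul] at h
    linarith
  rw [discrim] at hdisc
  linarith

theorem corrRatio_le_one (hPSD : ∀ v : ι ⊕ κ → ℝ, 0 ≤ v ⬝ᵥ fromBlocks A C Cᵀ B *ᵥ v)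
    (a : ι → ℝ) (b : κ → ℝ) : corrRatio A B C a b ≤ 1 := by
  have hα := dotProduct_mulVec_nonneg_of_fromBlocks hPSD a
  have hβ : 0 ≤ b ⬝ᵥ B *ᵥ b := by
    simpa [sumElim_dotProduct_fromBlocks_mulVec_sumElim] using hPSD (Sum.elim 0 b)
  refine div_le_one_of_le₀ ?_ (by positivity)
  calc a ⬝ᵥ C *ᵥ b ≤ |a ⬝ᵥ C *ᵥ b| := le_abs_self _
    _ ≤ √((a ⬝ᵥ A *ᵥ a) * (b ⬝ᵥ B *ᵥ b)) :=
      Real.abs_le_sqrt (sq_dotProduct_mulVec_le_of_fromBlocks hPSD a b)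
    _ = √(a ⬝ᵥ A *ᵥ a) * √(b ⬝ᵥ B *ᵥ b) := Real.sqrt_mul hα _

theorem exists_quadForm_eq_zero_of_not_isUnit_fromBlocks [DecidableEq ι] [DecidableEq κ]
    (hA : A.PosDef) (hB : B.PosDef) (hsing : ¬ IsUnit (fromBlocks A C Cᵀ B)) :
    ∃ (a : ι → ℝ) (b : κ → ℝ), a ≠ 0 ∧ b ≠ 0 ∧
      a ⬝ᵥ A *ᵥ a + 2 * (a ⬝ᵥ C *ᵥ b) + b ⬝ᵥ B *ᵥ b = 0 := by
  have hdet : (fromBlocks A C Cᵀ B).det = 0 := by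
    rwa [isUnit_iff_isUnit_det, isUnit_iff_ne_zero, not_not] at hsing
  obtain ⟨v, hv, hv0⟩ := exists_mulVec_eq_zero_iff.mpr hdet
  set a := v ∘ Sum.inl
  set b := v ∘ Sum.inr
  have hquad : a ⬝ᵥ A *ᵥ a + 2 * (a ⬝ᵥ C *ᵥ b) + b ⬝ᵥ B *ᵥ b = 0 := by
    rw [← sumElim_dotProduct_fromBlocks_mulVec_sumElim, Sum.elim_comp_inl_inr, hv0,
      dotProduct_zero]
  have hab : a ≠ 0 ∨ b ≠ 0 := by
    by_contra! h
    apply hv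
    ext (i | j)
    exacts [congrFun h.1 i, congrFun h.2 j]
  -- If one component vanished, `hquad` would make the other one isotropic for `A` or `B`.
  have ha : a ≠ 0 := fun ha0 => by
    have hb := hab.resolve_left (not_not.mpr ha0)
    have := hB.dotProduct_mulVec_pos hb
    simp_all
  have hb : b ≠ 0 := fun hb0 => by
    have := hA.dotProduct_mulVec_pos ha
    simp_all
  exact ⟨a, b, ha, hb, hquad⟩

theorem one_le_corrRatio_neg {a : ι → ℝ} {b : κ → ℝ}
    (hα : 0 < a ⬝ᵥ A *ᵥ a) (hβ : 0 < b ⬝ᵥ B *ᵥ b)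
    (hquad : a ⬝ᵥ A *ᵥ a + 2 * (a ⬝ᵥ C *ᵥ b) + b ⬝ᵥ B *ᵥ b = 0) :
    1 ≤ corrRatio A B C (-a) b := by
  rw [corrRatio, mulVec_neg, neg_dotProduct, neg_dotProduct, dotProduct_neg, neg_neg,
    one_le_div₀ (by positivity)]
  nlinarith [sq_nonneg (√(a ⬝ᵥ A *ᵥ a) - √(b ⬝ᵥ B *ᵥ b)), Real.sq_sqrt hα.le,
    Real.sq_sqrt hβ.le]

end Matrix

theorem stmt_8_general (n m : ℕ)
    (A : Matrix (Fin n) (Fin n) ℝ) (B : Matrix (Fin m) (Fin m) ℝ)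
    (C : Matrix (Fin n) (Fin m) ℝ)
    (hA : A.PosDef) (hB : B.PosDef)
    (hSigma : ∀ v : (Fin n ⊕ Fin m) → ℝ, 0 ≤ v ⬝ᵥ (Matrix.fromBlocks A C Cᵀ B).mulVec v)
    (hsing : ¬ IsUnit (Matrix.fromBlocks A C Cᵀ B)) :
    rho A B C = 1 := by
  obtain ⟨a, b, ha, hb, hquad⟩ := exists_quadForm_eq_zero_of_not_isUnit_fromBlocks hA hB hsing
  have hattained : corrRatio A B C (-a) b = 1 :=
    (corrRatio_le_one hSigma _ _).antisymm <| one_le_corrRatio_neg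
      (by simpa using hA.dotProduct_mulVec_pos ha) (by simpa using hB.dotProduct_mulVec_pos hb)
      hquad
  refine IsGreatest.csSup_eq ⟨⟨-a, b, neg_ne_zero.mpr ha, hb, hattained.symm⟩, ?_⟩
  rintro r ⟨a', b', -, -, rfl⟩
  exact corrRatio_le_one hSigma a' b'

/-- if the positive semidefinite block matrix Σ = [[A,C],[Cᵀ,B]]
(with A, B symmetric positive definite) is singular, then ρ(A,B,C) = 1. -/
theorem stmt_8 (n m : ℕ) (hn : 0 < n) (hm : 0 < m)
    (A : Matrix (Fin n) (Fin n) ℝ) (B : Matrix (Fin m) (Fin m) ℝ)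
    (C : Matrix (Fin n) (Fin m) ℝ)
    (hA : A.PosDef) (hB : B.PosDef)
    (hSigma : ∀ v : (Fin n ⊕ Fin m) → ℝ, 0 ≤ v ⬝ᵥ (Matrix.fromBlocks A C Cᵀ B).mulVec v)
    (hsing : ¬ IsUnit (Matrix.fromBlocks A C Cᵀ B)) :
    rho A B C = 1 :=
  stmt_8_general n m A B C hA hB hSigma hsing
end

section
/- (Lemma 1, column version.) Let A be a real symmetric positive definite n×n matrix, B a real symmetric positive definite m×m matrix, and C a real n×m matrix. Let a ∈ ℝⁿ and b ∈ ℝᵐ be an optimal CCA pair, i.e., aᵀ A a = 1, bᵀ B b = 1 and aᵀ C b = ρ(A,B,C). Let u ∈ ℝᵐ, d ∈ ℝ be such that B' = [[B, u],[uᵀ, d]] is positive definite, let v ∈ ℝⁿ, and let C' = [C v] be the n×(m+1) matrix obtained by appending v as a last column to C. Then ρ(A, B', C')² ≥ ρ(A, B, C)² + γ, where γ = (aᵀ C B⁻¹ u − aᵀ v)² / (d − uᵀ B⁻¹ u). -/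
/-!
Write `S = d - uᵀB⁻¹u` and `w = aᵀCB⁻¹u - aᵀv`. Completing the square with respect to `B` turns
the quadratic form of `B'` at `(y - tB⁻¹u, t)` into `yᵀBy + t²S`; hence `S > 0`, and testing
`ρ(A, B', C')` against `a` and `(sb - tB⁻¹u, t)` gives the quotient `(sρ - tw) / √(s² + t²S)`.
The Cauchy–Schwarz optimum `(s, t) = (ρ, -w/S)` makes it `√(ρ² + w²/S)`.
-/

open Matrix

section Bound

variable {ι κ : Type*} [Fintype ι] [Fintype κ]

theorem Matrix.PosDef.exists_pos_mul_norm_sq_le {M : Matrix ι ι ℝ} (hM : M.PosDef) :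
    ∃ c > 0, ∀ x : ι → ℝ, c * ‖x‖ ^ 2 ≤ x ⬝ᵥ M *ᵥ x := by
  rcases isEmpty_or_nonempty ι with _ | _
  · exact ⟨1, one_pos, fun x => by simp [Subsingleton.elim x 0]⟩
  have hQ : Continuous fun x : ι → ℝ => x ⬝ᵥ M *ᵥ x := by fun_prop
  obtain ⟨x₀, hx₀, hmin⟩ := (isCompact_sphere (0 : ι → ℝ) 1).exists_isMinOn
    (NormedSpace.sphere_nonempty.mpr zero_le_one) hQ.continuousOn
  refine ⟨_, by simpa using hM.dotProduct_mulVec_pos (ne_zero_of_mem_unit_sphere ⟨x₀, hx₀⟩),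
    fun x => ?_⟩
  rcases eq_or_ne x 0 with rfl | hx
  · simp
  have hx' : 0 < ‖x‖ := norm_pos_iff.mpr hx
  have h : x₀ ⬝ᵥ M *ᵥ x₀ ≤ (‖x‖⁻¹ • x) ⬝ᵥ M *ᵥ (‖x‖⁻¹ • x) :=
    hmin (by simp [norm_smul, hx'.ne'])
  simp only [mulVec_smul, dotProduct_smul, smul_dotProduct, smul_eq_mul] at h
  calc _ ≤ ‖x‖⁻¹ * (‖x‖⁻¹ * (x ⬝ᵥ M *ᵥ x)) * ‖x‖ ^ 2 := by gcongr
    _ = x ⬝ᵥ M *ᵥ x := by field_simp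

theorem dotProduct_mulVec_le_sum_abs_mul_norm_mul_norm (C : Matrix ι κ ℝ) (a : ι → ℝ)
    (b : κ → ℝ) :
    a ⬝ᵥ C *ᵥ b ≤ (∑ i, ∑ j, |C i j|) * ‖a‖ * ‖b‖ := by
  have entry (i : ι) (j : κ) : a i * (C i j * b j) ≤ |C i j| * ‖a‖ * ‖b‖ := by
    rw [mul_left_comm, mul_assoc]
    calc C i j * (a i * b j) ≤ |C i j * (a i * b j)| := le_abs_self _
      _ = |C i j| * (|a i| * |b j|) := by rw [abs_mul, abs_mul]
      _ ≤ |C i j| * (‖a‖ * ‖b‖) := by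
        gcongr
        · exact norm_le_pi_norm a i
        · exact norm_le_pi_norm b j
  calc a ⬝ᵥ C *ᵥ b = ∑ i, ∑ j, a i * (C i j * b j) := by
        simp only [dotProduct, mulVec, Finset.mul_sum]
    _ ≤ ∑ i, ∑ j, |C i j| * ‖a‖ * ‖b‖ :=
        Finset.sum_le_sum fun i _ => Finset.sum_le_sum fun j _ => entry i j
    _ = (∑ i, ∑ j, |C i j|) * ‖a‖ * ‖b‖ := by simp only [Finset.sum_mul]

theorem bddAbove_canonicalCorrelations {A : Matrix ι ι ℝ} {B : Matrix κ κ ℝ}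
    (hA : A.PosDef) (hB : B.PosDef) (C : Matrix ι κ ℝ) :
    BddAbove {r : ℝ | ∃ (a : ι → ℝ) (b : κ → ℝ), a ≠ 0 ∧ b ≠ 0 ∧
      r = (a ⬝ᵥ C *ᵥ b) / (√(a ⬝ᵥ A *ᵥ a) * √(b ⬝ᵥ B *ᵥ b))} := by
  obtain ⟨cA, hcA, hAc⟩ := hA.exists_pos_mul_norm_sq_le
  obtain ⟨cB, hcB, hBc⟩ := hB.exists_pos_mul_norm_sq_le
  refine ⟨(∑ i, ∑ j, |C i j|) / (√cA * √cB), ?_⟩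
  rintro r ⟨a, b, ha, hb, rfl⟩
  have hQa : √cA * ‖a‖ ≤ √(a ⬝ᵥ A *ᵥ a) := by
    simpa [Real.sqrt_mul hcA.le, Real.sqrt_sq (norm_nonneg a)] using Real.sqrt_le_sqrt (hAc a)
  have hQb : √cB * ‖b‖ ≤ √(b ⬝ᵥ B *ᵥ b) := by
    simpa [Real.sqrt_mul hcB.le, Real.sqrt_sq (norm_nonneg b)] using Real.sqrt_le_sqrt (hBc b)
  have ha' : 0 < ‖a‖ := norm_pos_iff.mpr ha
  have hb' : 0 < ‖b‖ := norm_pos_iff.mpr hb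
  calc (a ⬝ᵥ C *ᵥ b) / (√(a ⬝ᵥ A *ᵥ a) * √(b ⬝ᵥ B *ᵥ b))
      ≤ (∑ i, ∑ j, |C i j|) * ‖a‖ * ‖b‖ / ((√cA * ‖a‖) * (√cB * ‖b‖)) := by
        gcongr
        exact dotProduct_mulVec_le_sum_abs_mul_norm_mul_norm C a b
    _ = (∑ i, ∑ j, |C i j|) / (√cA * √cB) := by field_simp

theorem le_rho {A : Matrix ι ι ℝ} {B : Matrix κ κ ℝ} (hA : A.PosDef) (hB : B.PosDef)
    (C : Matrix ι κ ℝ) {a : ι → ℝ} {b : κ → ℝ} (ha : a ≠ 0) (hb : b ≠ 0) :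
    (a ⬝ᵥ C *ᵥ b) / (√(a ⬝ᵥ A *ᵥ a) * √(b ⬝ᵥ B *ᵥ b)) ≤ rho A B C :=
  le_csSup (bddAbove_canonicalCorrelations hA hB C) ⟨a, b, ha, hb, rfl⟩

end Bound

section Bordered

variable {ι κ : Type*} [Fintype ι] [Fintype κ]

theorem dotProduct_fromCols_replicateCol_mulVec (C : Matrix ι κ ℝ) (v a : ι → ℝ) (y : κ → ℝ)
    (t : ℝ) :
    a ⬝ᵥ fromCols C (replicateCol (Fin 1) v) *ᵥ (y ⊕ᵥ fun _ => t) = a ⬝ᵥ C *ᵥ y + t * (a ⬝ᵥ v) := by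
  rw [fromCols_mulVec_sumElim, dotProduct_add]
  congr 1
  simp [dotProduct, mulVec, Finset.mul_sum, mul_left_comm, mul_comm]

theorem dotProduct_fromBlocks_replicate_mulVec (B : Matrix κ κ ℝ) (u : κ → ℝ) (d : ℝ)
    (y : κ → ℝ) (t : ℝ) :
    (y ⊕ᵥ fun _ : Fin 1 => t) ⬝ᵥ
        fromBlocks B (replicateCol (Fin 1) u) (replicateRow (Fin 1) u) (of fun _ _ => d) *ᵥ
          (y ⊕ᵥ fun _ => t) =
      y ⬝ᵥ B *ᵥ y + 2 * t * (u ⬝ᵥ y) + d * t ^ 2 := by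
  rw [fromBlocks_mulVec, sumElim_dotProduct_sumElim]
  simp only [Sum.elim_comp_inl, Sum.elim_comp_inr, dotProduct_add,
    dotProduct_mulVec y (replicateCol (Fin 1) u), mulVec_replicateCol_eq_const,
    replicateRow_mulVec_eq_const, dotProduct_comm y u]
  generalize y ⬝ᵥ B *ᵥ y = Q, u ⬝ᵥ y = r
  simp [dotProduct, mulVec]
  ring

theorem dotProduct_fromBlocks_replicate_mulVec_sub_smul {B : Matrix κ κ ℝ} [DecidableEq κ]
    (hB : B.IsSymm) (hdet : IsUnit B.det) (u : κ → ℝ) (d : ℝ) (y : κ → ℝ) (t : ℝ) :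
    ((y - t • B⁻¹ *ᵥ u) ⊕ᵥ fun _ : Fin 1 => t) ⬝ᵥ
        fromBlocks B (replicateCol (Fin 1) u) (replicateRow (Fin 1) u) (of fun _ _ => d) *ᵥ
          ((y - t • B⁻¹ *ᵥ u) ⊕ᵥ fun _ => t) =
      y ⬝ᵥ B *ᵥ y + t ^ 2 * (d - u ⬝ᵥ B⁻¹ *ᵥ u) := by
  set p := B⁻¹ *ᵥ u
  have hBp : B *ᵥ p = u := by rw [mulVec_mulVec, mul_nonsing_inv _ hdet, one_mulVec]
  have hpB : p ᵥ* B = u := by rw [← hB.eq, vecMul_transpose, hBp]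
  rw [dotProduct_fromBlocks_replicate_mulVec]
  simp only [mulVec_sub, mulVec_smul, dotProduct_sub, sub_dotProduct, dotProduct_smul,
    smul_dotProduct, hBp, dotProduct_mulVec p B, hpB, smul_eq_mul]
  rw [dotProduct_comm y u, dotProduct_comm p u]
  ring

theorem sub_dotProduct_inv_mulVec_pos_of_posDef_fromBlocks {B : Matrix κ κ ℝ} [DecidableEq κ]
    (hB : B.IsSymm) (hdet : IsUnit B.det) {u : κ → ℝ} {d : ℝ}
    (hB' : (fromBlocks B (replicateCol (Fin 1) u) (replicateRow (Fin 1) u)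
      (of fun _ _ => d)).PosDef) :
    0 < d - u ⬝ᵥ B⁻¹ *ᵥ u := by
  have hx : ((0 - (1 : ℝ) • B⁻¹ *ᵥ u) ⊕ᵥ fun _ : Fin 1 => (1 : ℝ)) ≠ 0 :=
    fun h => one_ne_zero (congrFun h (Sum.inr 0))
  have h := hB'.dotProduct_mulVec_pos hx
  rwa [star_trivial, dotProduct_fromBlocks_replicate_mulVec_sub_smul hB hdet, zero_dotProduct,
    one_pow, one_mul, zero_add] at h

end Bordered

theorem stmt_15_general (n m : ℕ)
    (A : Matrix (Fin n) (Fin n) ℝ) (B : Matrix (Fin m) (Fin m) ℝ)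
    (C : Matrix (Fin n) (Fin m) ℝ)
    (hA : A.PosDef) (hB : B.PosDef)
    (a : Fin n → ℝ) (b : Fin m → ℝ)
    (ha : a ⬝ᵥ A.mulVec a = 1) (hb : b ⬝ᵥ B.mulVec b = 1)
    (hopt : a ⬝ᵥ C.mulVec b = rho A B C)
    (u : Fin m → ℝ) (d : ℝ)
    (hB2 : (Matrix.fromBlocks B (Matrix.replicateCol (Fin 1) u) (Matrix.replicateRow (Fin 1) u)
      (Matrix.of fun _ _ => d)).PosDef)
    (v : Fin n → ℝ) :
    (rho A B C) ^ 2 + (a ⬝ᵥ (C * B⁻¹).mulVec u - a ⬝ᵥ v) ^ 2 / (d - u ⬝ᵥ B⁻¹.mulVec u)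
      ≤ (rho A
          (Matrix.fromBlocks B (Matrix.replicateCol (Fin 1) u) (Matrix.replicateRow (Fin 1) u)
            (Matrix.of fun _ _ => d))
          (Matrix.fromCols C (Matrix.replicateCol (Fin 1) v))) ^ 2 := by
  set ρ := rho A B C
  set S := d - u ⬝ᵥ B⁻¹ *ᵥ u
  set w := a ⬝ᵥ (C * B⁻¹) *ᵥ u - a ⬝ᵥ v
  have hBs : B.IsSymm := isHermitian_iff_isSymm.mp hB.isHermitian
  have hBu : IsUnit B.det := (isUnit_iff_isUnit_det B).mp hB.isUnit
  have hS : 0 < S := sub_dotProduct_inv_mulVec_pos_of_posDef_fromBlocks hBs hBu hB2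
  set y := (ρ • b - (-w / S) • B⁻¹ *ᵥ u) ⊕ᵥ fun _ : Fin 1 => -w / S
  have hden : y ⬝ᵥ fromBlocks B (replicateCol (Fin 1) u) (replicateRow (Fin 1) u)
      (of fun _ _ => d) *ᵥ y = ρ ^ 2 + w ^ 2 / S := by
    rw [dotProduct_fromBlocks_replicate_mulVec_sub_smul hBs hBu]
    simp only [mulVec_smul, dotProduct_smul, smul_dotProduct, hb, smul_eq_mul, mul_one]
    change ρ * ρ + (-w / S) ^ 2 * S = _
    field_simp
  have hnum : a ⬝ᵥ fromCols C (replicateCol (Fin 1) v) *ᵥ y = ρ ^ 2 + w ^ 2 / S := by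
    rw [dotProduct_fromCols_replicateCol_mulVec, mulVec_sub, mulVec_smul, mulVec_smul,
      mulVec_mulVec, dotProduct_sub, dotProduct_smul, dotProduct_smul, hopt]
    simp only [smul_eq_mul, w]
    field_simp
    ring
  rcases (by positivity : 0 ≤ ρ ^ 2 + w ^ 2 / S).eq_or_lt with h0 | hpos
  · rw [← h0]
    positivity
  have hy : y ≠ 0 := fun h => by rw [h, zero_dotProduct] at hden; linarith
  have ha0 : a ≠ 0 := fun h => by simp [h] at ha
  have key := le_rho hA hB2 (fromCols C (replicateCol (Fin 1) v)) ha0 hy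
  rw [hnum, hden, ha, Real.sqrt_one, one_mul, Real.div_sqrt] at key
  exact (Real.sqrt_le_left ((Real.sqrt_nonneg _).trans key)).mp key

/-- Lemma 1, column version: if (a,b) is a normalized optimal CCA
pair for (A,B,C), then augmenting B to B' = [[B,u],[uᵀ,d]] (positive definite) and
C to C' = [C v] gives ρ(A,B',C')² ≥ ρ(A,B,C)² + (aᵀ C B⁻¹ u − aᵀ v)²/(d − uᵀ B⁻¹ u). -/
theorem stmt_15 (n m : ℕ) (hn : 0 < n) (hm : 0 < m)
    (A : Matrix (Fin n) (Fin n) ℝ) (B : Matrix (Fin m) (Fin m) ℝ)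
    (C : Matrix (Fin n) (Fin m) ℝ)
    (hA : A.PosDef) (hB : B.PosDef)
    (a : Fin n → ℝ) (b : Fin m → ℝ)
    (ha : a ⬝ᵥ A.mulVec a = 1) (hb : b ⬝ᵥ B.mulVec b = 1)
    (hopt : a ⬝ᵥ C.mulVec b = rho A B C)
    (u : Fin m → ℝ) (d : ℝ)
    (hB2 : (Matrix.fromBlocks B (Matrix.replicateCol (Fin 1) u) (Matrix.replicateRow (Fin 1) u)
      (Matrix.of fun _ _ => d)).PosDef)
    (v : Fin n → ℝ) :
    (rho A B C) ^ 2 + (a ⬝ᵥ (C * B⁻¹).mulVec u - a ⬝ᵥ v) ^ 2 / (d - u ⬝ᵥ B⁻¹.mulVec u)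
      ≤ (rho A
          (Matrix.fromBlocks B (Matrix.replicateCol (Fin 1) u) (Matrix.replicateRow (Fin 1) u)
            (Matrix.of fun _ _ => d))
          (Matrix.fromCols C (Matrix.replicateCol (Fin 1) v))) ^ 2 :=
  stmt_15_general n m A B C hA hB a b ha hb hopt u d hB2 v
end

section
/- (Lemma 1, row version.) Let A be a real symmetric positive definite n×n matrix, B a real symmetric positive definite m×m matrix, and C a real n×m matrix. Let a ∈ ℝⁿ and b ∈ ℝᵐ be an optimal CCA pair, i.e., aᵀ A a = 1, bᵀ B b = 1 and aᵀ C b = ρ(A,B,C). Let w ∈ ℝⁿ, e ∈ ℝ be such that A' = [[A, w],[wᵀ, e]] is positive definite, let r ∈ ℝᵐ, and let C'' be the (n+1)×m matrix obtained by appending rᵀ as a last row to C. Then ρ(A', B, C'')² ≥ ρ(A, B, C)² + δ, where δ = (bᵀ Cᵀ A⁻¹ w − bᵀ r)² / (e − wᵀ A⁻¹ w). -/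
/-!
With `u = A⁻¹ w` and the Schur complement `d = e - wᵀ u > 0`, completing the square gives
`(a - t u, t)ᵀ A' (a - t u, t) = aᵀ A a + t² d = 1 + t² d`, while
`(a - t u, t)ᵀ C'' b = ρ - t g` with `g = uᵀ C b - rᵀ b`. Testing `ρ(A', B, C'')` on these
pairs gives `ρ(A', B, C'')² ≥ (ρ - t g)² / (1 + t² d)` for every real `t`, and the supremum of
the right-hand side over `t` is `ρ² + g² / d`: it is attained at `t = -g / (d ρ)` if `ρ ≠ 0`
and approached as `t → ∞` if `ρ = 0`.

The supremum defining `ρ` is finite because the ratio is invariant under positive rescaling of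
both vectors, hence takes all its values on the compact product of unit spheres.
-/

open Matrix

section CCA

variable {ι κ : Type*} [Fintype ι] [Fintype κ]
  (A : Matrix ι ι ℝ) (B : Matrix κ κ ℝ) (C : Matrix ι κ ℝ)

noncomputable def ccaRatio (x : ι → ℝ) (y : κ → ℝ) : ℝ :=
  (x ⬝ᵥ C *ᵥ y) / (Real.sqrt (x ⬝ᵥ A *ᵥ x) * Real.sqrt (y ⬝ᵥ B *ᵥ y))

theorem ccaRatio_smul_smul (x : ι → ℝ) (y : κ → ℝ) {s t : ℝ} (hs : 0 < s) (ht : 0 < t) :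
    ccaRatio A B C (s • x) (t • y) = ccaRatio A B C x y := by
  simp only [ccaRatio, mulVec_smul, smul_dotProduct, dotProduct_smul, smul_eq_mul,
    ← mul_assoc, Real.sqrt_mul (mul_self_nonneg _), Real.sqrt_mul_self hs.le,
    Real.sqrt_mul_self ht.le]
  field_simp

theorem ccaRatio_neg_left (x : ι → ℝ) (y : κ → ℝ) :
    ccaRatio A B C (-x) y = -ccaRatio A B C x y := by
  simp only [ccaRatio, mulVec_neg, neg_dotProduct, dotProduct_neg, neg_neg, neg_div]

variable {A B}

theorem continuousOn_ccaRatio (hA : A.PosDef) (hB : B.PosDef) :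
    ContinuousOn (fun p : (ι → ℝ) × (κ → ℝ) => ccaRatio A B C p.1 p.2) {p | p.1 ≠ 0 ∧ p.2 ≠ 0} := by
  refine ContinuousOn.div (by fun_prop) (by fun_prop) fun p hp => ?_
  exact mul_ne_zero (Real.sqrt_pos.2 (hA.dotProduct_mulVec_pos hp.1)).ne'
    (Real.sqrt_pos.2 (hB.dotProduct_mulVec_pos hp.2)).ne'

theorem bddAbove_ccaRatio (hA : A.PosDef) (hB : B.PosDef) :
    BddAbove {r | ∃ x y, x ≠ 0 ∧ y ≠ 0 ∧ r = ccaRatio A B C x y} := by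
  have hcompact := (isCompact_sphere (0 : ι → ℝ) 1).prod (isCompact_sphere (0 : κ → ℝ) 1)
  refine ((hcompact.bddAbove_image ((continuousOn_ccaRatio C hA hB).mono ?_))).mono ?_
  · rintro ⟨x, y⟩ ⟨hx, hy⟩
    exact ⟨ne_zero_of_mem_unit_sphere ⟨x, hx⟩, ne_zero_of_mem_unit_sphere ⟨y, hy⟩⟩
  · rintro _ ⟨x, y, hx, hy, rfl⟩
    refine ⟨(‖x‖⁻¹ • x, ‖y‖⁻¹ • y), ⟨?_, ?_⟩, ccaRatio_smul_smul A B C x y ?_ ?_⟩ <;>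
      simp [norm_smul, hx, hy]

theorem ccaRatio_le_rho (hA : A.PosDef) (hB : B.PosDef) {x : ι → ℝ} {y : κ → ℝ}
    (hx : x ≠ 0) (hy : y ≠ 0) : ccaRatio A B C x y ≤ rho A B C :=
  le_csSup (bddAbove_ccaRatio C hA hB) ⟨x, y, hx, hy, rfl⟩

theorem ccaRatio_sq_le_rho_sq (hA : A.PosDef) (hB : B.PosDef) {x : ι → ℝ} {y : κ → ℝ}
    (hx : x ≠ 0) (hy : y ≠ 0) : ccaRatio A B C x y ^ 2 ≤ rho A B C ^ 2 := by
  refine sq_le_sq' ?_ (ccaRatio_le_rho C hA hB hx hy)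
  rw [neg_le, ← ccaRatio_neg_left]
  exact ccaRatio_le_rho C hA hB (neg_ne_zero.2 hx) hy

end CCA

section Bordered

variable {ι κ : Type*} [Fintype ι] [Fintype κ]

abbrev borderedMatrix (A : Matrix ι ι ℝ) (w : ι → ℝ) (e : ℝ) : Matrix (ι ⊕ Fin 1) (ι ⊕ Fin 1) ℝ :=
  fromBlocks A (replicateCol (Fin 1) w) (replicateRow (Fin 1) w) (of fun _ _ => e)

theorem sumElim_dotProduct_borderedMatrix_mulVec_sumElim (A : Matrix ι ι ℝ) (w y : ι → ℝ)
    (e s : ℝ) :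
    Sum.elim y (fun _ : Fin 1 => s) ⬝ᵥ borderedMatrix A w e *ᵥ Sum.elim y (fun _ => s) =
      y ⬝ᵥ A *ᵥ y + 2 * s * (w ⬝ᵥ y) + s ^ 2 * e := by
  simp only [fromBlocks_mulVec, Sum.elim_comp_inl, Sum.elim_comp_inr, sumElim_dotProduct_sumElim]
  have hcol : replicateCol (Fin 1) w *ᵥ (fun _ => s) = s • w := by
    ext i; simp [mulVec, dotProduct, mul_comm]
  have hrow : replicateRow (Fin 1) w *ᵥ y = fun _ => w ⬝ᵥ y := by
    ext i; simp [mulVec]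
  simp only [hcol, hrow, dotProduct_add, dotProduct_smul, smul_eq_mul, dotProduct_comm y w]
  simp [dotProduct, mulVec]
  ring

theorem sumElim_sub_smul_dotProduct_borderedMatrix_mulVec {A : Matrix ι ι ℝ} (hA : A.IsSymm)
    {u w : ι → ℝ} (hu : A *ᵥ u = w) (e : ℝ) (y : ι → ℝ) (s : ℝ) :
    Sum.elim (y - s • u) (fun _ : Fin 1 => s) ⬝ᵥ borderedMatrix A w e *ᵥ
        Sum.elim (y - s • u) (fun _ => s) =
      y ⬝ᵥ A *ᵥ y + s ^ 2 * (e - w ⬝ᵥ u) := by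
  have huy : u ⬝ᵥ A *ᵥ y = w ⬝ᵥ y := by
    rw [dotProduct_mulVec, ← mulVec_transpose, hA.eq, hu, dotProduct_comm]
  rw [sumElim_dotProduct_borderedMatrix_mulVec_sumElim]
  simp only [mulVec_sub, mulVec_smul, hu, sub_dotProduct, dotProduct_sub, smul_dotProduct,
    dotProduct_smul, smul_eq_mul, huy, dotProduct_comm y w, dotProduct_comm u w]
  ring

theorem sumElim_dotProduct_fromRows_mulVec (C : Matrix ι κ ℝ) (r : κ → ℝ) (y : ι → ℝ) (s : ℝ)
    (b : κ → ℝ) :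
    Sum.elim y (fun _ : Fin 1 => s) ⬝ᵥ fromRows C (replicateRow (Fin 1) r) *ᵥ b =
      y ⬝ᵥ C *ᵥ b + s * (r ⬝ᵥ b) := by
  simp [dotProduct, mulVec]

theorem schur_complement_pos {A : Matrix ι ι ℝ} (hA : A.IsSymm) {u w : ι → ℝ}
    (hu : A *ᵥ u = w) {e : ℝ} (hA' : (borderedMatrix A w e).PosDef) : 0 < e - w ⬝ᵥ u := by
  have hpos := hA'.dotProduct_mulVec_pos (x := Sum.elim (0 - (1 : ℝ) • u) fun _ => 1)
    fun h => one_ne_zero (congrFun h (Sum.inr 0))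
  rw [star_trivial, sumElim_sub_smul_dotProduct_borderedMatrix_mulVec hA hu] at hpos
  simpa using hpos

theorem sq_sub_mul_div_le_rho_borderedMatrix_sq {A : Matrix ι ι ℝ} {B : Matrix κ κ ℝ}
    (C : Matrix ι κ ℝ) (hA : A.IsSymm) (hB : B.PosDef) {u w : ι → ℝ} (hu : A *ᵥ u = w) {e : ℝ}
    (hA' : (borderedMatrix A w e).PosDef)
    {a : ι → ℝ} {b : κ → ℝ} (ha : a ⬝ᵥ A *ᵥ a = 1) (hb : b ⬝ᵥ B *ᵥ b = 1) (r : κ → ℝ) (t : ℝ) :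
    (a ⬝ᵥ C *ᵥ b - t * (u ⬝ᵥ C *ᵥ b - r ⬝ᵥ b)) ^ 2 / (1 + t ^ 2 * (e - w ⬝ᵥ u)) ≤
      rho (borderedMatrix A w e) B (fromRows C (replicateRow (Fin 1) r)) ^ 2 := by
  have hquad := sumElim_sub_smul_dotProduct_borderedMatrix_mulVec hA hu e a t
  have hnum := sumElim_dotProduct_fromRows_mulVec C r (a - t • u) t b
  rw [ha] at hquad
  set x : ι ⊕ Fin 1 → ℝ := Sum.elim (a - t • u) fun _ => t
  have hD : 0 < 1 + t ^ 2 * (e - w ⬝ᵥ u) := by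
    have := schur_complement_pos hA hu hA'
    positivity
  have hx : x ≠ 0 := by
    rintro h
    rw [h, zero_dotProduct] at hquad
    exact hD.ne hquad
  have hb0 : b ≠ 0 := by rintro rfl; simp at hb
  have hratio := ccaRatio_sq_le_rho_sq (fromRows C (replicateRow (Fin 1) r)) hA' hB hx hb0
  rw [ccaRatio, hquad, hnum, hb, Real.sqrt_one, mul_one, div_pow, Real.sq_sqrt hD.le] at hratio
  convert hratio using 2
  simp only [sub_dotProduct, smul_dotProduct, smul_eq_mul]
  ring

end Bordered

theorem add_sq_div_le_of_forall {ρ g d K : ℝ} (hd : 0 < d)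
    (h : ∀ t : ℝ, (ρ - t * g) ^ 2 / (1 + t ^ 2 * d) ≤ K) : ρ ^ 2 + g ^ 2 / d ≤ K := by
  rcases eq_or_ne ρ 0 with rfl | hρ
  · have hlim : Filter.Tendsto (fun t : ℝ => g ^ 2 / (t⁻¹ ^ 2 + d)) Filter.atTop
        (nhds (g ^ 2 / (0 ^ 2 + d))) :=
      tendsto_const_nhds.div ((tendsto_inv_atTop_zero.pow 2).add_const d) (by positivity)
    have hle := le_of_tendsto hlim <| (Filter.eventually_ne_atTop 0).mono fun t ht =>
      (h t).trans_eq' (by field_simp; ring)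
    simpa using hle
  · convert h (-g / (d * ρ)) using 1
    field_simp
    ring

theorem stmt_16_general (n m : ℕ)
    (A : Matrix (Fin n) (Fin n) ℝ) (B : Matrix (Fin m) (Fin m) ℝ)
    (C : Matrix (Fin n) (Fin m) ℝ)
    (hA : A.PosDef) (hB : B.PosDef)
    (a : Fin n → ℝ) (b : Fin m → ℝ)
    (ha : a ⬝ᵥ A.mulVec a = 1) (hb : b ⬝ᵥ B.mulVec b = 1)
    (hopt : a ⬝ᵥ C.mulVec b = rho A B C)
    (w : Fin n → ℝ) (e : ℝ)
    (hA2 : (Matrix.fromBlocks A (Matrix.replicateCol (Fin 1) w) (Matrix.replicateRow (Fin 1) w)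
      (Matrix.of fun _ _ => e)).PosDef)
    (r : Fin m → ℝ) :
    (rho A B C) ^ 2 + (b ⬝ᵥ (Cᵀ * A⁻¹).mulVec w - b ⬝ᵥ r) ^ 2 / (e - w ⬝ᵥ A⁻¹.mulVec w)
      ≤ (rho
          (Matrix.fromBlocks A (Matrix.replicateCol (Fin 1) w) (Matrix.replicateRow (Fin 1) w)
            (Matrix.of fun _ _ => e))
          B
          (Matrix.fromRows C (Matrix.replicateRow (Fin 1) r))) ^ 2 := by
  set u := A⁻¹ *ᵥ w
  have hu : A *ᵥ u = w := by
    rw [mulVec_mulVec, mul_nonsing_inv A (A.isUnit_iff_isUnit_det.1 hA.isUnit), one_mulVec]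
  have hAsymm : A.IsSymm := isHermitian_iff_isSymm.1 hA.isHermitian
  have hg : b ⬝ᵥ (Cᵀ * A⁻¹) *ᵥ w - b ⬝ᵥ r = u ⬝ᵥ C *ᵥ b - r ⬝ᵥ b := by
    rw [← mulVec_mulVec, dotProduct_mulVec, vecMul_transpose, dotProduct_comm, dotProduct_comm b]
  rw [hg, ← hopt]
  exact add_sq_div_le_of_forall (schur_complement_pos hAsymm hu hA2)
    (sq_sub_mul_div_le_rho_borderedMatrix_sq C hAsymm hB hu hA2 ha hb r)

/-- Lemma 1, row version: if (a,b) is a normalized optimal CCA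
pair for (A,B,C), then augmenting A to A' = [[A,w],[wᵀ,e]] (positive definite) and
C to C'' (appending row rᵀ) gives ρ(A',B,C'')² ≥ ρ(A,B,C)² + (bᵀ Cᵀ A⁻¹ w − bᵀ r)²/(e − wᵀ A⁻¹ w). -/
theorem stmt_16 (n m : ℕ) (hn : 0 < n) (hm : 0 < m)
    (A : Matrix (Fin n) (Fin n) ℝ) (B : Matrix (Fin m) (Fin m) ℝ)
    (C : Matrix (Fin n) (Fin m) ℝ)
    (hA : A.PosDef) (hB : B.PosDef)
    (a : Fin n → ℝ) (b : Fin m → ℝ)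
    (ha : a ⬝ᵥ A.mulVec a = 1) (hb : b ⬝ᵥ B.mulVec b = 1)
    (hopt : a ⬝ᵥ C.mulVec b = rho A B C)
    (w : Fin n → ℝ) (e : ℝ)
    (hA2 : (Matrix.fromBlocks A (Matrix.replicateCol (Fin 1) w) (Matrix.replicateRow (Fin 1) w)
      (Matrix.of fun _ _ => e)).PosDef)
    (r : Fin m → ℝ) :
    (rho A B C) ^ 2 + (b ⬝ᵥ (Cᵀ * A⁻¹).mulVec w - b ⬝ᵥ r) ^ 2 / (e - w ⬝ᵥ A⁻¹.mulVec w)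
      ≤ (rho
          (Matrix.fromBlocks A (Matrix.replicateCol (Fin 1) w) (Matrix.replicateRow (Fin 1) w)
            (Matrix.of fun _ _ => e))
          B
          (Matrix.fromRows C (Matrix.replicateRow (Fin 1) r))) ^ 2 :=
  stmt_16_general n m A B C hA hB a b ha hb hopt w e hA2 r
end
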